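/- arXiv:2403.07168 — 3 statements merged into one kernel-verified Lean document; each statement's English description precedes it below -/
import Mathlib

section
/- For a Young diagram λ, the rational function x · ∏_{□∈λ} ((x - ħc_□)² - ħ²)/((x - ħc_□)²) equals ∏_{□∈∂₊λ}(x - ħc_□) / ∏_{■∈∂₋λ}(x - ħc_■), where ∂₊λ is the set of boxes that can be added to λ (keeping it a Young diagram) and ∂₋λ is the set of boxes that can be removed from λ. -/
open Finset

/-- A box can be added to the Young diagram `μ` keeping it a Young diagram. -/
def IsAddable (μ : YoungDiagram) (c : ℕ × ℕ) : Prop :=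
  c ∉ μ ∧ IsLowerSet (insert c (μ.cells : Set (ℕ × ℕ)))

/-- A box can be removed from the Young diagram `μ` keeping it a Young diagram. -/
def IsRemovable (μ : YoungDiagram) (c : ℕ × ℕ) : Prop :=
  c ∈ μ ∧ IsLowerSet ((μ.cells : Set (ℕ × ℕ)) \ {c})

/-- The content of a box. -/
def content (c : ℕ × ℕ) : ℤ := (c.1 : ℤ) - (c.2 : ℤ)

lemma addable_iff (μ : YoungDiagram) (i j : ℕ) :
    IsAddable μ (i, j) ↔ j = μ.rowLen i ∧ (i = 0 ∨ μ.rowLen i < μ.rowLen (i - 1)) := by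
  constructor
  · rintro ⟨hnm, hls⟩
    have hge : μ.rowLen i ≤ j := by
      by_contra hc
      exact hnm (YoungDiagram.mem_iff_lt_rowLen.mpr (not_le.mp hc))
    have hj : j = μ.rowLen i := by
      rcases Nat.eq_zero_or_pos j with h0 | h0
      · omega
      · have : ((i, j - 1) : ℕ × ℕ) ∈ insert ((i, j) : ℕ × ℕ) (μ.cells : Set (ℕ × ℕ)) := by
          apply hls (a := (i, j)) (b := (i, j - 1)) ⟨le_refl _, by omega⟩ (Set.mem_insert _ _)
        rcases this with h | h
        · exfalso; have := (Prod.ext_iff.mp h).2; simp at this; omega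
        · have : j - 1 < μ.rowLen i := YoungDiagram.mem_iff_lt_rowLen.mp (by simpa using h)
          omega
    refine ⟨hj, ?_⟩
    rcases Nat.eq_zero_or_pos i with h0 | h0
    · exact Or.inl h0
    · right
      have : ((i - 1, j) : ℕ × ℕ) ∈ insert ((i, j) : ℕ × ℕ) (μ.cells : Set (ℕ × ℕ)) := by
        apply hls (a := (i, j)) (b := (i - 1, j)) ⟨by omega, le_refl _⟩ (Set.mem_insert _ _)
      rcases this with h | h
      · exfalso; have := (Prod.ext_iff.mp h).1; simp at this; omega
      · have : j < μ.rowLen (i - 1) := YoungDiagram.mem_iff_lt_rowLen.mp (by simpa using h)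
        omega
  · rintro ⟨hj, hcond⟩
    constructor
    · rw [YoungDiagram.mem_iff_lt_rowLen]; omega
    · rintro ⟨a, b⟩ ⟨c, d⟩ ⟨hc, hd⟩ hp
      simp only [Set.mem_insert_iff] at hp ⊢
      by_cases hq : ((c, d) : ℕ × ℕ) = (i, j)
      · exact Or.inl hq
      · right
        rcases hp with hp | hp
        · have ha : a = i := (Prod.ext_iff.mp hp).1
          have hb : b = j := (Prod.ext_iff.mp hp).2
          simp only [Prod.mk.injEq, not_and] at hq
          rw [Finset.mem_coe, YoungDiagram.mem_cells, YoungDiagram.mem_iff_lt_rowLen]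
          simp only at hc hd
          rcases Nat.lt_or_ge c i with hca | hca
          · have : i ≠ 0 := by omega
            rcases hcond with h0 | h0
            · omega
            · have h1 : μ.rowLen (i - 1) ≤ μ.rowLen c := μ.rowLen_anti _ _ (by omega)
              omega
          · have hci : c = i := by omega
            have : d ≠ j := fun h => hq hci h
            rw [hci]
            omega
        · exact μ.isLowerSet ⟨hc, hd⟩ hp

lemma removable_iff (μ : YoungDiagram) (i j : ℕ) :
    IsRemovable μ (i, j) ↔ j + 1 = μ.rowLen i ∧ μ.rowLen (i + 1) < μ.rowLen i := by
  constructor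
  · rintro ⟨hm, hls⟩
    have hj : j < μ.rowLen i := YoungDiagram.mem_iff_lt_rowLen.mp hm
    have h1 : ¬ ((i, j + 1) : ℕ × ℕ) ∈ μ := by
      intro hmem
      have : ((i, j) : ℕ × ℕ) ∈ (μ.cells : Set (ℕ × ℕ)) \ {(i, j)} :=
        hls (a := (i, j + 1)) (b := (i, j)) ⟨le_refl _, by omega⟩
          ⟨by simpa using hmem, by simp⟩
      simp at this
    have h2 : ¬ ((i + 1, j) : ℕ × ℕ) ∈ μ := by
      intro hmem
      have : ((i, j) : ℕ × ℕ) ∈ (μ.cells : Set (ℕ × ℕ)) \ {(i, j)} :=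
        hls (a := (i + 1, j)) (b := (i, j)) ⟨by omega, le_refl _⟩
          ⟨by simpa using hmem, by simp⟩
      simp at this
    rw [YoungDiagram.mem_iff_lt_rowLen] at h1 h2
    constructor <;> omega
  · rintro ⟨hj, hlt⟩
    constructor
    · rw [YoungDiagram.mem_iff_lt_rowLen]; omega
    · rintro ⟨a, b⟩ ⟨c, d⟩ ⟨hc, hd⟩ ⟨hp, hp2⟩
      have hab : b < μ.rowLen a := YoungDiagram.mem_iff_lt_rowLen.mp (by simpa using hp)
      refine ⟨μ.isLowerSet ⟨hc, hd⟩ hp, ?_⟩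
      simp only [Set.mem_singleton_iff, Prod.mk.injEq, not_and]
      intro hci hdj
      simp only [Set.mem_singleton_iff, Prod.mk.injEq, not_and] at hp2
      simp only at hc hd
      have hai : a ≤ i := by
        by_contra hca
        have : μ.rowLen a ≤ μ.rowLen (i + 1) := μ.rowLen_anti _ _ (by omega)
        omega
      have ha : a = i := by omega
      have hb : b = j := by
        have := ha ▸ hab
        omega
      exact hp2 ha hb

lemma row_telescope (x h a : ℂ) (m : ℕ) (hm : 1 ≤ m)
    (hne : ∀ j : ℕ, j < m → x - h * (a - j) ≠ 0) :
    ∏ j ∈ Finset.range m, (((x - h * (a - j)) ^ 2 - h ^ 2) / (x - h * (a - j)) ^ 2)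
      = ((x - h * (a - m)) * (x - h * (a + 1))) / ((x - h * a) * (x - h * (a - m + 1))) := by
  induction m, hm using Nat.le_induction with
  | base =>
    have h0 : x - h * a ≠ 0 := by simpa using hne 0 one_pos
    rw [Finset.prod_range_one]
    rw [div_eq_div_iff (pow_ne_zero 2 (by simpa using h0)) (by
      push_cast
      rw [show a - 1 + 1 = a by ring]
      exact mul_ne_zero h0 h0)]
    push_cast
    ring
  | succ m hm ih =>
    have h1 : x - h * a ≠ 0 := by simpa using hne 0 (by omega)
    have h2 : x - h * (a - m) ≠ 0 := hne m (by omega)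
    have h3 : x - h * (a - m + 1) ≠ 0 := by
      have := hne (m - 1) (by omega)
      rw [show ((m - 1 : ℕ) : ℂ) = (m : ℂ) - 1 by
        rw [Nat.cast_sub hm]; push_cast; ring] at this
      convert this using 2
      ring
    rw [Finset.prod_range_succ, ih (fun j hj => hne j (by omega)), div_mul_div_comm]
    rw [div_eq_div_iff (mul_ne_zero (mul_ne_zero h1 h3) (pow_ne_zero 2 h2)) (by
      push_cast
      rw [show a - (m + 1) + 1 = a - m by ring]
      exact mul_ne_zero h1 h2)]
    push_cast
    ring

/-- numerator factor -/
def auxf (μ : YoungDiagram) (x h : ℂ) (i : ℕ) : ℂ := x - h * ((i : ℂ) - (μ.rowLen i : ℂ))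
/-- denominator factor -/
def auxg (μ : YoungDiagram) (x h : ℂ) (i : ℕ) : ℂ := x - h * ((i : ℂ) - (μ.rowLen i : ℂ) + 1)
/-- telescoping factor -/
def auxu (x h : ℂ) (i : ℕ) : ℂ := x - h * (i : ℂ)

/-- x · ∏_{□∈λ} ((x - ħc_□)² - ħ²)/((x - ħc_□)²)
  = ∏_{□∈∂₊λ}(x - ħc_□) / ∏_{■∈∂₋λ}(x - ħc_■). -/
theorem stmt1 (μ : YoungDiagram) (A R : Finset (ℕ × ℕ))
    (hA : ∀ c, c ∈ A ↔ IsAddable μ c) (hR : ∀ c, c ∈ R ↔ IsRemovable μ c)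
    (x h : ℂ) (hh : h ≠ 0)
    (hden1 : ∀ c ∈ μ.cells, x - h * (content c : ℂ) ≠ 0)
    (hden2 : ∀ c ∈ R, x - h * (content c : ℂ) ≠ 0) :
    x * ∏ c ∈ μ.cells, (((x - h * (content c : ℂ))^2 - h^2) / (x - h * (content c : ℂ))^2)
      = (∏ c ∈ A, (x - h * (content c : ℂ))) / ∏ c ∈ R, (x - h * (content c : ℂ)) := by
  classical
  set n := μ.colLen 0 with hn
  have hpos : ∀ i, 0 < μ.rowLen i ↔ i < n := fun i => by
    rw [← YoungDiagram.mem_iff_lt_rowLen, YoungDiagram.mem_iff_lt_colLen]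
  set T : Finset ℕ := (Finset.range n).filter (fun i => μ.rowLen (i + 1) < μ.rowLen i)
    with hTdef
  have hcont : ∀ p : ℕ × ℕ, ((content p : ℤ) : ℂ) = (p.1 : ℂ) - (p.2 : ℂ) := by
    intro p; simp [content]
  -- A and R descriptions
  have hAeq : A = insert (0, μ.rowLen 0) (T.image fun i => (i + 1, μ.rowLen (i + 1))) := by
    ext ⟨i, j⟩
    rw [hA, addable_iff]
    simp only [Finset.mem_insert, Finset.mem_image, hTdef, Finset.mem_filter,
      Finset.mem_range, Prod.mk.injEq]
    constructor
    · rintro ⟨rfl, h0 | hlt⟩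
      · exact Or.inl ⟨h0, by rw [h0]⟩
      · have hi : i ≠ 0 := by
          rintro rfl
          simp at hlt
        right
        refine ⟨i - 1, ⟨(hpos _).mp (by omega), by
          rw [show i - 1 + 1 = i by omega]; exact hlt⟩, by omega, by
          rw [show i - 1 + 1 = i by omega]⟩
    · rintro (⟨rfl, rfl⟩ | ⟨k, ⟨hk, hlt⟩, rfl, rfl⟩)
      · exact ⟨rfl, Or.inl rfl⟩
      · exact ⟨rfl, Or.inr (by simpa using hlt)⟩
  have hReq : R = T.image fun i => (i, μ.rowLen i - 1) := by
    ext ⟨i, j⟩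
    rw [hR, removable_iff]
    simp only [Finset.mem_image, hTdef, Finset.mem_filter, Finset.mem_range, Prod.mk.injEq]
    constructor
    · rintro ⟨hj, hlt⟩
      exact ⟨i, ⟨(hpos _).mp (by omega), hlt⟩, rfl, by omega⟩
    · rintro ⟨k, ⟨hk, hlt⟩, rfl, rfl⟩
      exact ⟨by omega, hlt⟩
  -- cells decomposition
  have hcells : μ.cells
      = (Finset.range n).biUnion (fun i => (Finset.range (μ.rowLen i)).image fun j => (i, j)) := by
    ext ⟨i, j⟩
    simp only [YoungDiagram.mem_cells, Finset.mem_biUnion, Finset.mem_image,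
      Finset.mem_range, Prod.mk.injEq, YoungDiagram.mem_iff_lt_rowLen]
    constructor
    · intro hj
      exact ⟨i, (hpos _).mp (by omega), j, hj, rfl, rfl⟩
    · rintro ⟨a, _, b, hb, rfl, rfl⟩
      exact hb
  -- nonvanishing
  have hu : ∀ i, i < n → auxu x h i ≠ 0 := by
    intro i hi
    have := hden1 (i, 0) (by simp [YoungDiagram.mem_cells, YoungDiagram.mem_iff_lt_rowLen,
      (hpos i).mpr hi])
    rw [hcont] at this
    simpa [auxu] using this
  have hgne : ∀ i, i < n → auxg μ x h i ≠ 0 := by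
    intro i hi
    have h1 : 1 ≤ μ.rowLen i := (hpos i).mpr hi
    have := hden1 (i, μ.rowLen i - 1) (by
      simp only [YoungDiagram.mem_cells, YoungDiagram.mem_iff_lt_rowLen]; omega)
    rw [hcont] at this
    have hc : ((μ.rowLen i - 1 : ℕ) : ℂ) = (μ.rowLen i : ℂ) - 1 := by
      rw [Nat.cast_sub h1]; push_cast; ring
    simp only [hc] at this
    rw [auxg]
    convert this using 2
    ring
  -- rewrite LHS
  rw [hcells, Finset.prod_biUnion (by
    intro a _ b _ hab
    simp only [Finset.disjoint_left, Finset.mem_image, Finset.mem_range]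
    rintro ⟨p, q⟩ ⟨j, _, hj⟩ ⟨j', _, hj'⟩
    have e1 := (Prod.ext_iff.mp hj).1
    have e2 := (Prod.ext_iff.mp hj').1
    exact hab (by omega))]
  have hrow : ∀ i ∈ Finset.range n,
      (∏ c ∈ (Finset.range (μ.rowLen i)).image (fun j => (i, j)),
        (((x - h * (content c : ℂ))^2 - h^2) / (x - h * (content c : ℂ))^2))
      = (auxf μ x h i * auxu x h (i + 1)) / (auxu x h i * auxg μ x h i) := by
    intro i hi
    rw [Finset.mem_range] at hi
    rw [Finset.prod_image (by
      intro j _ j' _ hjj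
      exact (Prod.ext_iff.mp hjj).2)]
    have hQ : ∀ j ∈ Finset.range (μ.rowLen i),
        (((x - h * (content (i, j) : ℂ))^2 - h^2) / (x - h * (content (i, j) : ℂ))^2)
        = (((x - h * ((i : ℂ) - j)) ^ 2 - h ^ 2) / (x - h * ((i : ℂ) - j)) ^ 2) := by
      intro j _
      rw [hcont]
    rw [Finset.prod_congr rfl hQ,
      row_telescope x h i (μ.rowLen i) ((hpos i).mpr hi) (by
        intro j hj
        have := hden1 (i, j) (by simp [YoungDiagram.mem_cells,
          YoungDiagram.mem_iff_lt_rowLen, hj])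
        rwa [hcont] at this)]
    rw [auxf, auxg, auxu, auxu]
    push_cast
    ring_nf
  rw [Finset.prod_congr rfl hrow, Finset.prod_div_distrib, Finset.prod_mul_distrib,
    Finset.prod_mul_distrib]
  -- rewrite RHS
  rw [hAeq, hReq]
  rw [Finset.prod_insert (by
    simp only [Finset.mem_image]
    rintro ⟨k, _, hk⟩
    exact (by omega : (0 : ℕ) ≠ k + 1) (Prod.ext_iff.mp hk.symm).1)]
  rw [Finset.prod_image (by
    intro a _ b _ hab
    have : a + 1 = b + 1 := (Prod.ext_iff.mp hab).1
    omega), Finset.prod_image (by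
    intro a _ b _ hab
    exact (Prod.ext_iff.mp hab).1)]
  have hTn : ∀ k ∈ T, k < n := by
    intro k hk
    rw [hTdef, Finset.mem_filter, Finset.mem_range] at hk
    exact hk.1
  have hF0 : x - h * (content (0, μ.rowLen 0) : ℂ) = auxf μ x h 0 := by
    rw [hcont, auxf]
  have hFA : ∀ k ∈ T, x - h * (content (k + 1, μ.rowLen (k + 1)) : ℂ) = auxf μ x h (k + 1) := by
    intro k _
    rw [hcont, auxf]
  have hFR : ∀ k ∈ T, x - h * (content (k, μ.rowLen k - 1) : ℂ) = auxg μ x h k := by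
    intro k hk
    have h1 : 1 ≤ μ.rowLen k := (hpos k).mpr (hTn k hk)
    rw [hcont, auxg]
    have hc : ((μ.rowLen k - 1 : ℕ) : ℂ) = (μ.rowLen k : ℂ) - 1 := by
      rw [Nat.cast_sub h1]; push_cast; ring
    simp only [hc]
    ring_nf
  rw [hF0, Finset.prod_congr rfl hFA, Finset.prod_congr rfl hFR]
  -- final algebra
  have hPu : (∏ i ∈ Finset.range n, auxu x h i) ≠ 0 :=
    Finset.prod_ne_zero_iff.mpr fun i hi => hu i (Finset.mem_range.mp hi)
  have hPg : (∏ i ∈ Finset.range n, auxg μ x h i) ≠ 0 :=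
    Finset.prod_ne_zero_iff.mpr fun i hi => hgne i (Finset.mem_range.mp hi)
  have hGt : (∏ i ∈ T, auxg μ x h i) ≠ 0 :=
    Finset.prod_ne_zero_iff.mpr fun i hi => hgne i (hTn i hi)
  rw [← mul_div_assoc, div_eq_div_iff (mul_ne_zero hPu hPg) hGt]
  have e1 : (∏ i ∈ Finset.range n, auxu x h (i + 1)) * auxu x h 0
      = (∏ i ∈ Finset.range n, auxu x h i) * auxu x h n := by
    rw [← Finset.prod_range_succ', Finset.prod_range_succ]
  have e2 : (∏ i ∈ Finset.range n, auxf μ x h i) * auxf μ x h n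
      = auxf μ x h 0 * ∏ i ∈ Finset.range n, auxf μ x h (i + 1) := by
    rw [← Finset.prod_range_succ, Finset.prod_range_succ']
    ring
  have e4 : auxf μ x h n = auxu x h n := by
    have h0 : μ.rowLen n = 0 := by
      have := hpos n
      omega
    rw [auxf, auxu, h0]
    push_cast
    ring
  have e5 : auxu x h 0 = x := by
    rw [auxu]
    push_cast
    ring
  have e3 : (∏ i ∈ Finset.range n, auxf μ x h (i + 1)) * (∏ i ∈ T, auxg μ x h i)
      = (∏ i ∈ T, auxf μ x h (i + 1)) * ∏ i ∈ Finset.range n, auxg μ x h i := by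
    have hsf := (Finset.prod_filter_mul_prod_filter_not (Finset.range n)
      (fun i => μ.rowLen (i + 1) < μ.rowLen i) (fun i => auxf μ x h (i + 1))).symm
    have hsg := (Finset.prod_filter_mul_prod_filter_not (Finset.range n)
      (fun i => μ.rowLen (i + 1) < μ.rowLen i) (fun i => auxg μ x h i)).symm
    rw [← hTdef] at hsf hsg
    have hfc : ∀ i ∈ (Finset.range n).filter (fun i => ¬ μ.rowLen (i + 1) < μ.rowLen i),
        auxf μ x h (i + 1) = auxg μ x h i := by
      intro i hi
      rw [Finset.mem_filter] at hi
      have hle : μ.rowLen (i + 1) ≤ μ.rowLen i := μ.rowLen_anti _ _ (by omega)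
      have heq : μ.rowLen (i + 1) = μ.rowLen i := by omega
      rw [auxf, auxg, heq]
      push_cast
      ring
    rw [hsf, hsg, Finset.prod_congr rfl hfc]
    ring
  linear_combination ((∏ i ∈ Finset.range n, auxf μ x h i) * (∏ i ∈ T, auxg μ x h i)) * e1
    - ((∏ i ∈ Finset.range n, auxf μ x h i) * (∏ i ∈ T, auxg μ x h i)
        * (∏ i ∈ Finset.range n, auxu x h (i + 1))) * e5
    - ((∏ i ∈ Finset.range n, auxf μ x h i) * (∏ i ∈ Finset.range n, auxu x h i)
        * (∏ i ∈ T, auxg μ x h i)) * e4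
    + ((∏ i ∈ Finset.range n, auxu x h i) * (∏ i ∈ T, auxg μ x h i)) * e2
    + ((∏ i ∈ Finset.range n, auxu x h i) * auxf μ x h 0) * e3
end

section
/- For real θ and 0 < q < 1, -i·x(q^{1/2}e^{iθ})/m = sin θ · g_q(cos θ), where g_q(c) = 2 Σ_{r ∈ ℤ_{≥0}+1/2} q^r/(1 - 2q^r c + q^{2r}) is real; hence x(q^{1/2}e^{iθ}) ∈ imℝ when m ∈ ℝ. -/
/-- The map x(z) = m(z/(1-z) + Σ_{n≥1}(zqⁿ/(1-zqⁿ) + qⁿ/(qⁿ-z))). -/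
noncomputable def xMap (m q z : ℂ) : ℂ :=
  m * (z / (1 - z) + ∑' n : ℕ,
    (z * q ^ (n + 1) / (1 - z * q ^ (n + 1)) + q ^ (n + 1) / (q ^ (n + 1) - z)))

/-- g_q(c) = 2 Σ_{r ∈ ℤ_{≥0}+1/2} q^r/(1 - 2q^r c + q^{2r}). -/
noncomputable def gq (q c : ℝ) : ℝ :=
  2 * ∑' n : ℕ, q ^ ((n : ℝ) + 1/2) /
    (1 - 2 * q ^ ((n : ℝ) + 1/2) * c + q ^ (2 * ((n : ℝ) + 1/2)))

open Complex

private lemma norm_cs (c s : ℝ) (hcs : c^2 + s^2 = 1) : ‖(c:ℂ) + s*I‖ = 1 := by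
  rw [Complex.norm_add_mul_I, hcs, Real.sqrt_one]

private lemma norm_cs' (c s : ℝ) (hcs : c^2 + s^2 = 1) : ‖(c:ℂ) - s*I‖ = 1 := by
  have h : (c:ℂ) - s*I = (c:ℂ) + ((-s : ℝ):ℂ)*I := by push_cast; ring
  rw [h, norm_cs c (-s) (by simpa using hcs)]

private lemma one_sub_ne (t c s : ℝ) (hcs : c^2 + s^2 = 1) (ht : |t| < 1) :
    (1:ℂ) - t*((c:ℂ)+s*I) ≠ 0 := by
  intro h
  rw [sub_eq_zero] at h
  have := congrArg norm h
  rw [norm_one, norm_mul, Complex.norm_real, norm_cs c s hcs, Real.norm_eq_abs, mul_one] at this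
  rw [← this] at ht
  exact lt_irrefl _ ht

private lemma one_sub_ne' (t c s : ℝ) (hcs : c^2 + s^2 = 1) (ht : |t| < 1) :
    (1:ℂ) - t*((c:ℂ)-s*I) ≠ 0 := by
  intro h
  rw [sub_eq_zero] at h
  have := congrArg norm h
  rw [norm_one, norm_mul, Complex.norm_real, norm_cs' c s hcs, Real.norm_eq_abs, mul_one] at this
  rw [← this] at ht
  exact lt_irrefl _ ht

private lemma norm_frac_le (t c s a : ℝ) (hcs : c^2 + s^2 = 1) (ht0 : 0 ≤ t) (hta : t ≤ a)
    (ha1 : a < 1) :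
    ‖(t:ℂ)*((c:ℂ)+s*I)/(1 - (t:ℂ)*((c:ℂ)+s*I))‖ ≤ t / (1 - a) := by
  rw [norm_div, norm_mul, Complex.norm_real, norm_cs c s hcs, Real.norm_eq_abs,
    _root_.abs_of_nonneg ht0, mul_one]
  have h1 : (1:ℝ) - a ≤ ‖1 - (t:ℂ)*((c:ℂ)+s*I)‖ := by
    have h2 : ‖(1:ℂ)‖ - ‖(t:ℂ)*((c:ℂ)+s*I)‖ ≤ ‖1 - (t:ℂ)*((c:ℂ)+s*I)‖ := norm_sub_norm_le _ _
    rw [norm_one, norm_mul, Complex.norm_real, norm_cs c s hcs, Real.norm_eq_abs,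
      _root_.abs_of_nonneg ht0, mul_one] at h2
    linarith
  exact div_le_div₀ ht0 le_rfl (by linarith) h1

private lemma norm_frac_le' (t c s a : ℝ) (hcs : c^2 + s^2 = 1) (ht0 : 0 ≤ t) (hta : t ≤ a)
    (ha1 : a < 1) :
    ‖(t:ℂ)*((c:ℂ)-s*I)/(1 - (t:ℂ)*((c:ℂ)-s*I))‖ ≤ t / (1 - a) := by
  rw [norm_div, norm_mul, Complex.norm_real, norm_cs' c s hcs, Real.norm_eq_abs,
    _root_.abs_of_nonneg ht0, mul_one]
  have h1 : (1:ℝ) - a ≤ ‖1 - (t:ℂ)*((c:ℂ)-s*I)‖ := by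
    have h2 : ‖(1:ℂ)‖ - ‖(t:ℂ)*((c:ℂ)-s*I)‖ ≤ ‖1 - (t:ℂ)*((c:ℂ)-s*I)‖ := norm_sub_norm_le _ _
    rw [norm_one, norm_mul, Complex.norm_real, norm_cs' c s hcs, Real.norm_eq_abs,
      _root_.abs_of_nonneg ht0, mul_one] at h2
    linarith
  exact div_le_div₀ ht0 le_rfl (by linarith) h1

private lemma frac_key (t c s : ℝ) (hcs : c^2 + s^2 = 1)
    (hw : (1:ℂ) - t*((c:ℂ)+s*I) ≠ 0) (hw' : (1:ℂ) - t*((c:ℂ)-s*I) ≠ 0)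
    (hD : 1 - 2*t*c + t^2 ≠ 0) :
    (t:ℂ)*((c:ℂ)+s*I)/(1 - (t:ℂ)*((c:ℂ)+s*I)) + -((t:ℂ)*((c:ℂ)-s*I)/(1 - (t:ℂ)*((c:ℂ)-s*I)))
      = I * ((s * 2 * (t/(1-2*t*c+t^2)) : ℝ)) := by
  have hcs' : (c:ℂ)^2 + (s:ℂ)^2 = 1 := by exact_mod_cast congrArg (Complex.ofReal) hcs
  have hDc : ((1-2*t*c+t^2 : ℝ) : ℂ) ≠ 0 := by exact_mod_cast hD
  have hDc2 : (1:ℂ) - 2*(t:ℂ)*(c:ℂ)+(t:ℂ)^2 ≠ 0 := by exact_mod_cast hD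
  have hprod : (1 - (t:ℂ)*((c:ℂ)+s*I)) * (1 - (t:ℂ)*((c:ℂ)-s*I)) = ((1-2*t*c+t^2 : ℝ):ℂ) := by
    push_cast
    linear_combination (-(t:ℂ)^2*(s:ℂ)^2) * Complex.I_sq + (t:ℂ)^2 * hcs'
  rw [← sub_eq_add_neg, div_sub_div _ _ hw hw', hprod, div_eq_iff hDc]
  push_cast
  have hx : (t:ℂ)/(1 - 2*(t:ℂ)*(c:ℂ)+(t:ℂ)^2) * (1 - 2*(t:ℂ)*(c:ℂ)+(t:ℂ)^2) = t :=
    div_mul_cancel₀ _ hDc2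
  linear_combination (-(I*(s:ℂ)*2)) * hx

private lemma second_term (q a c s : ℝ) (n : ℕ) (hcs : c^2 + s^2 = 1)
    (ha2 : a^2 = q) (hq0 : 0 < q) (ha : q < a) (ha0 : 0 < a) (ht1 : q^n * a < 1)
    (ht0 : 0 < q^n*a) :
    (q:ℂ)^(n+1) / ((q:ℂ)^(n+1) - (a:ℂ)*((c:ℂ)+s*I))
      = -(((q^n*a : ℝ):ℂ)*((c:ℂ)-s*I)/(1 - ((q^n*a : ℝ):ℂ)*((c:ℂ)-s*I))) := by
  have hcs' : (c:ℂ)^2 + (s:ℂ)^2 = 1 := by exact_mod_cast congrArg (Complex.ofReal) hcs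
  have hne2 : (1:ℂ) - ((q^n*a : ℝ):ℂ)*((c:ℂ)-s*I) ≠ 0 :=
    one_sub_ne' _ c s hcs (by rw [_root_.abs_of_nonneg ht0.le]; exact ht1)
  have hne1 : (q:ℂ)^(n+1) - (a:ℂ)*((c:ℂ)+s*I) ≠ 0 := by
    intro h
    rw [sub_eq_zero] at h
    have := congrArg norm h
    rw [norm_pow, norm_mul, Complex.norm_real, Complex.norm_real, norm_cs c s hcs,
      Real.norm_eq_abs, Real.norm_eq_abs, _root_.abs_of_nonneg hq0.le,
      _root_.abs_of_nonneg ha0.le, mul_one] at this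
    have hle : q^(n+1) ≤ q := pow_le_of_le_one hq0.le
      (le_of_lt (lt_of_lt_of_le ha (by nlinarith))) (Nat.succ_ne_zero n)
    nlinarith
  rw [neg_div', div_eq_div_iff hne1 hne2]
  have hE : ((c:ℂ)+s*I) * ((c:ℂ)-s*I) = 1 := by
    linear_combination (-(s:ℂ)^2) * Complex.I_sq + hcs'
  have hTa : ((q^n*a : ℝ):ℂ) * (a:ℂ) = (q:ℂ)^(n+1) := by
    push_cast
    have : ((a:ℝ):ℂ)^2 = (q:ℂ) := by exact_mod_cast congrArg (Complex.ofReal) ha2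
    linear_combination ((q:ℂ))^n * this
  linear_combination (-(((q^n*a : ℝ):ℂ) * (a:ℂ))) * hE - ((c:ℂ)+s*I)*((c:ℂ)-s*I) * hTa + hTa
    - (2 - (c:ℂ)^2 + (s:ℂ)^2*Complex.I^2) * hTa

/-- on the circle |z| = q^{1/2}, i.e. z = q^{1/2}e^{iθ},
x(z) = i m sin θ · g_q(cos θ); in particular x(q^{1/2}e^{iθ}) ∈ imℝ for m ∈ ℝ. -/
theorem stmt10 (q m θ : ℝ) (hq0 : 0 < q) (hq1 : q < 1) (hm : m ≠ 0) :
    xMap (m : ℂ) (q : ℂ) ((Real.sqrt q : ℂ) * Complex.exp (θ * Complex.I))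
      = Complex.I * (m : ℂ) * ((Real.sin θ * gq q (Real.cos θ) : ℝ) : ℂ) := by
  set a := Real.sqrt q with ha_def
  set c := Real.cos θ with hc_def
  set s := Real.sin θ with hs_def
  have hcs : c^2 + s^2 = 1 := by rw [hc_def, hs_def, add_comm]; exact Real.sin_sq_add_cos_sq θ
  have hc1 : c ≤ 1 := Real.cos_le_one θ
  have ha0 : 0 < a := Real.sqrt_pos.2 hq0
  have ha2 : a^2 = q := Real.sq_sqrt hq0.le
  have ha1 : a < 1 := by nlinarith
  have hqa : q < a := by nlinarith
  have ht0 : ∀ n : ℕ, 0 < q^n * a := fun n => mul_pos (pow_pos hq0 n) ha0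
  have hta : ∀ n : ℕ, q^n * a ≤ a := fun n => by
    nlinarith [pow_le_one₀ hq0.le hq1.le (n := n), (pow_pos hq0 n).le]
  have ht1 : ∀ n : ℕ, q^n * a < 1 := fun n => lt_of_le_of_lt (hta n) ha1
  have htabs : ∀ n : ℕ, |q^n * a| < 1 := fun n => by
    rw [_root_.abs_of_nonneg (ht0 n).le]; exact ht1 n
  have hD : ∀ n : ℕ, 0 < 1 - 2*(q^n*a)*c + (q^n*a)^2 := fun n => by
    nlinarith [sq_nonneg (1 - q^n*a), mul_nonneg (ht0 n).le (sub_nonneg.2 hc1), ht1 n, ht0 n]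
  -- abbreviations
  set A : ℕ → ℂ := fun n =>
    ((q^n*a : ℝ):ℂ)*((c:ℂ)+s*I)/(1 - ((q^n*a : ℝ):ℂ)*((c:ℂ)+s*I)) with hA_def
  set B : ℕ → ℂ := fun n =>
    -(((q^n*a : ℝ):ℂ)*((c:ℂ)-s*I)/(1 - ((q^n*a : ℝ):ℂ)*((c:ℂ)-s*I))) with hB_def
  set F : ℕ → ℝ := fun n => s * 2 * ((q^n*a)/(1 - 2*(q^n*a)*c + (q^n*a)^2)) with hF_def
  have hgeo : Summable (fun n : ℕ => (a/(1-a)) * q^n) :=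
    (summable_geometric_of_lt_one hq0.le hq1).mul_left _
  have hSA : Summable A := by
    refine Summable.of_norm_bounded hgeo (fun n => ?_)
    have h := norm_frac_le (q^n*a) c s a hcs (ht0 n).le (hta n) ha1
    rw [hA_def]
    refine le_trans h (le_of_eq ?_)
    field_simp
  have hSB : Summable B := by
    refine Summable.of_norm_bounded hgeo (fun n => ?_)
    have h := norm_frac_le' (q^n*a) c s a hcs (ht0 n).le (hta n) ha1
    rw [hB_def]
    simp only [norm_neg]
    refine le_trans h (le_of_eq ?_)
    field_simp
  have hSA1 : Summable (fun n => A (n+1)) := (summable_nat_add_iff 1).2 hSA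
  have he : Complex.exp ((θ:ℂ) * Complex.I) = (c:ℂ) + s*I := by
    rw [Complex.exp_mul_I, ← Complex.ofReal_cos, ← Complex.ofReal_sin, ← hc_def, ← hs_def]
  rw [xMap, he]
  have hz0 : (a:ℂ)*((c:ℂ)+s*I) / (1 - (a:ℂ)*((c:ℂ)+s*I)) = A 0 := by
    rw [hA_def]
    norm_num
  have hterm : ∀ n : ℕ,
      (a:ℂ)*((c:ℂ)+s*I) * (q:ℂ)^(n+1) / (1 - (a:ℂ)*((c:ℂ)+s*I) * (q:ℂ)^(n+1))
        + (q:ℂ)^(n+1) / ((q:ℂ)^(n+1) - (a:ℂ)*((c:ℂ)+s*I)) = A (n+1) + B n := by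
    intro n
    have hzq : (a:ℂ)*((c:ℂ)+s*I) * (q:ℂ)^(n+1) = ((q^(n+1)*a : ℝ):ℂ)*((c:ℂ)+s*I) := by
      push_cast; ring
    rw [hzq, hA_def, hB_def]
    exact congrArg _ (second_term q a c s n hcs ha2 hq0 hqa ha0 (ht1 n) (ht0 n))
  have hkey : ∀ n : ℕ, A n + B n = I * ((F n : ℝ) : ℂ) := fun n => by
    rw [hA_def, hB_def, hF_def]
    exact frac_key (q^n*a) c s hcs (one_sub_ne _ c s hcs (htabs n))
      (one_sub_ne' _ c s hcs (htabs n)) (hD n).ne'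
  have hsum : ∑' n : ℕ,
      ((a:ℂ)*((c:ℂ)+s*I) * (q:ℂ)^(n+1) / (1 - (a:ℂ)*((c:ℂ)+s*I) * (q:ℂ)^(n+1))
        + (q:ℂ)^(n+1) / ((q:ℂ)^(n+1) - (a:ℂ)*((c:ℂ)+s*I)))
      = (∑' n : ℕ, A (n+1)) + ∑' n : ℕ, B n := by
    rw [tsum_congr hterm, Summable.tsum_add hSA1 hSB]
  rw [hsum, hz0]
  have hshift : A 0 + ((∑' n : ℕ, A (n+1)) + ∑' n : ℕ, B n) = (∑' n, A n) + ∑' n, B n := by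
    rw [Summable.tsum_eq_zero_add hSA]; ring
  rw [hshift, ← Summable.tsum_add hSA hSB, tsum_congr hkey, tsum_mul_left, ← Complex.ofReal_tsum]
  have hFsum : (∑' n, F n) = s * gq q c := by
    have hgq : gq q c = 2 * ∑' n : ℕ, (q^n*a)/(1 - 2*(q^n*a)*c + (q^n*a)^2) := by
      rw [gq]
      congr 1
      refine tsum_congr fun n => ?_
      have hr : q ^ ((n:ℝ) + 1/2) = q^n * a := by
        rw [Real.rpow_add hq0, Real.rpow_natCast, ← Real.sqrt_eq_rpow, ← ha_def]
      have hr2 : q ^ (2 * ((n:ℝ) + 1/2)) = (q^n * a)^2 := by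
        rw [mul_comm, Real.rpow_mul hq0.le, hr,
          show (2:ℝ) = ((2:ℕ):ℝ) by norm_num, Real.rpow_natCast]
      rw [hr, hr2]
    rw [hF_def, tsum_mul_left, hgq]
    ring
  rw [hFsum]
  ring
end

section
/- Let t̂(x) be a formal power series with t̂(0) = 0 and t(x) = t̂(x) - t̂(x - m). For partitions λ and the diagonal shift p ∈ ℤ, define d(λ,p) = Σ_{i=0}^{r-1} t̂(x + m(n_i - 1)) - Σ_{j=0}^{s-1} t̂(x - m(k_j + 1)), where n_j = λᵗ_{j+1} - j + p for j = 0,...,r-1 and k_{s-i} = λ_i - i - p for i = 1,...,s encode λ with shift p, and d'(λ,p) = Σ_{□∈λ} t(x + m(p + c_□)). Then d(λ,p) - d'(λ,p) = d(∅,p), where d(∅,p) = Σ_{j=0}^{p-1} t̂(x + jm) for p ≥ 0 and d(∅,p) = -Σ_{j=1}^{-p} t̂(x - jm) for p < 0. -/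
open Finset

/-- d'(λ,p) = Σ_{□∈λ} t(x + m(p + c_□)), where boxes (i,j) have 1 ≤ i ≤ ℓ,
1 ≤ j ≤ λ_i and content c = i - j. -/
noncomputable def dPrime (t : ℂ → ℂ) (m x : ℂ) (p : ℤ) (ℓ : ℕ) (lam : ℕ → ℕ) : ℂ :=
  ∑ i ∈ Finset.Icc 1 ℓ, ∑ j ∈ Finset.Icc 1 (lam i),
    t (x + m * ((p + (i : ℤ) - (j : ℤ) : ℤ) : ℂ))

/-- Splitting a sum over an integer interval. -/
lemma int_sum_split (F : ℤ → ℂ) {a b c : ℤ} (h1 : a ≤ b + 1) (h2 : b ≤ c) :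
    ∑ x ∈ Finset.Icc a c, F x
      = (∑ x ∈ Finset.Icc a b, F x) + ∑ x ∈ Finset.Icc (b+1) c, F x := by
  rw [← Finset.sum_union]
  · congr 1
    ext y
    simp only [Finset.mem_Icc, Finset.mem_union]
    omega
  · rw [Finset.disjoint_left]
    intro y hy hy'
    simp only [Finset.mem_Icc] at hy hy'
    omega

/-- Splitting a sum over a natural-number interval. -/
lemma nat_sum_split (F : ℕ → ℂ) {a b c : ℕ} (h1 : a ≤ b + 1) (h2 : b ≤ c) :
    ∑ x ∈ Finset.Icc a c, F x
      = (∑ x ∈ Finset.Icc a b, F x) + ∑ x ∈ Finset.Icc (b+1) c, F x := by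
  rw [← Finset.sum_union]
  · congr 1
    ext y
    simp only [Finset.mem_Icc, Finset.mem_union]
    omega
  · rw [Finset.disjoint_left]
    intro y hy hy'
    simp only [Finset.mem_Icc] at hy hy'
    omega

section Conj

variable (lam lamT : ℕ → ℕ) (ℓ : ℕ)
variable (hmono : ∀ i j, 1 ≤ i → i ≤ j → lam j ≤ lam i)
variable (hsupp : ∀ i, ℓ < i → lam i = 0)
variable (hconj : ∀ j, lamT j = ((Finset.Icc 1 ℓ).filter (fun i => j ≤ lam i)).card)

include hmono hsupp hconj in
/-- Basic conjugation equivalence: j ≤ λ_i ↔ i ≤ λᵗ_j  (i, j ≥ 1). -/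
lemma conj_iff {i j : ℕ} (hi : 1 ≤ i) (hj : 1 ≤ j) : j ≤ lam i ↔ i ≤ lamT j := by
  rw [hconj]
  constructor
  · intro h
    have hiℓ : i ≤ ℓ := by
      by_contra hc
      push_neg at hc
      have := hsupp i hc
      omega
    calc i = (Finset.Icc 1 i).card := by simp
      _ ≤ _ := by
          apply Finset.card_le_card
          intro a ha
          simp only [Finset.mem_Icc] at ha
          simp only [Finset.mem_filter, Finset.mem_Icc]
          exact ⟨⟨ha.1, le_trans ha.2 hiℓ⟩, le_trans h (hmono a i ha.1 ha.2)⟩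
  · intro h
    by_contra hc
    push_neg at hc
    have hsub : ((Finset.Icc 1 ℓ).filter (fun i' => j ≤ lam i')) ⊆ Finset.Icc 1 (i-1) := by
      intro a ha
      simp only [Finset.mem_filter, Finset.mem_Icc] at ha
      simp only [Finset.mem_Icc]
      refine ⟨ha.1.1, ?_⟩
      by_contra hca
      push_neg at hca
      have : lam a ≤ lam i := hmono i a hi (by omega)
      omega
    have := Finset.card_le_card hsub
    simp only [Nat.card_Icc] at this
    omega

include hconj in
lemma lamT_mono {j j' : ℕ} (h : j ≤ j') : lamT j' ≤ lamT j := by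
  rw [hconj, hconj]
  apply Finset.card_le_card
  intro a ha
  simp only [Finset.mem_filter] at ha ⊢
  exact ⟨ha.1, le_trans h ha.2⟩

include hconj in
lemma lamT_le (j : ℕ) : lamT j ≤ ℓ := by
  rw [hconj]
  calc _ ≤ (Finset.Icc 1 ℓ).card := Finset.card_filter_le _ _
    _ = ℓ := by simp

include hmono hsupp hconj in
/-- Complementarity, existence half. -/
lemma exists_ab (c : ℤ) :
    (∃ j : ℕ, 1 ≤ j ∧ (lamT j : ℤ) - j = c) ∨ (∃ i : ℕ, 1 ≤ i ∧ (i : ℤ) - 1 - lam i = c) := by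
  have hex : ∃ i : ℕ, 1 ≤ i ∧ (lam i : ℤ) ≤ (i : ℤ) - 1 - c := by
    refine ⟨ℓ + 1 + c.toNat + 1, by omega, ?_⟩
    rw [hsupp _ (by omega)]
    push_cast
    omega
  classical
  obtain ⟨i0, ⟨hi0, hle⟩, hminp⟩ :
      ∃ i0 : ℕ, (1 ≤ i0 ∧ (lam i0 : ℤ) ≤ (i0 : ℤ) - 1 - c) ∧
        ∀ i' : ℕ, i' < i0 → ¬(1 ≤ i' ∧ (lam i' : ℤ) ≤ (i' : ℤ) - 1 - c) :=
    ⟨Nat.find hex, Nat.find_spec hex, fun i' h => Nat.find_min hex h⟩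
  by_cases heq : (lam i0 : ℤ) = (i0 : ℤ) - 1 - c
  · right
    exact ⟨i0, hi0, by omega⟩
  · left
    have hlt : (lam i0 : ℤ) ≤ (i0 : ℤ) - 2 - c := by omega
    have hjnn : (0 : ℤ) ≤ (i0 : ℤ) - 1 - c := by
      have : (0:ℤ) ≤ (lam i0 : ℤ) := Int.natCast_nonneg _
      omega
    set j := ((i0 : ℤ) - 1 - c).toNat with hjdef
    have hjz : (j : ℤ) = (i0 : ℤ) - 1 - c := by omega
    have hj1 : 1 ≤ j := by
      have : (0:ℤ) ≤ (lam i0 : ℤ) := Int.natCast_nonneg _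
      omega
    refine ⟨j, hj1, ?_⟩
    have hub : lamT j < i0 := by
      have h := conj_iff lam lamT ℓ hmono hsupp hconj hi0 hj1
      omega
    have hlb : i0 - 1 ≤ lamT j := by
      rcases Nat.eq_or_lt_of_le hi0 with h1 | h1
      · omega
      · have hmin := hminp (i0 - 1) (by omega)
        push_neg at hmin
        have h2 : 1 ≤ i0 - 1 := by omega
        have h3 : ((i0 - 1 : ℕ) : ℤ) - 1 - c < (lam (i0 - 1) : ℤ) := hmin h2
        have h := conj_iff lam lamT ℓ hmono hsupp hconj h2 hj1
        omega
    omega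

include hmono hsupp hconj in
/-- Complementarity, exclusivity half. -/
lemma not_both (c : ℤ)
    (hA : ∃ j : ℕ, 1 ≤ j ∧ (lamT j : ℤ) - j = c)
    (hB : ∃ i : ℕ, 1 ≤ i ∧ (i : ℤ) - 1 - lam i = c) : False := by
  obtain ⟨j, hj, hAe⟩ := hA
  obtain ⟨i, hi, hBe⟩ := hB
  have h := conj_iff lam lamT ℓ hmono hsupp hconj hi hj
  omega

end Conj

/-- with n_j = λᵗ_{j+1} - j + p (j = 0,…,r-1) and k_{s-i} = λ_i - i - p
(i = 1,…,s), and d(λ,p) = Σ_j t̂(x + m(n_j - 1)) - Σ_j t̂(x - m(k_j + 1)),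
d'(λ,p) = Σ_{□∈λ} t(x + m(p + c_□)) with t(y) = t̂(y) - t̂(y - m), one has
d(λ,p) - d'(λ,p) = d(∅,p) = Σ_{j=0}^{p-1} t̂(x + jm)  (p ≥ 0),
resp. -Σ_{j=1}^{-p} t̂(x - jm)  (p < 0). -/
theorem stmt16 (th t : ℂ → ℂ) (m x : ℂ)
    (ht : ∀ y : ℂ, t y = th y - th (y - m))
    (lam lamT : ℕ → ℕ) (ℓ : ℕ)
    (hmono : ∀ i j, 1 ≤ i → i ≤ j → lam j ≤ lam i)
    (hsupp : ∀ i, ℓ < i → lam i = 0)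
    (hconj : ∀ j, lamT j = ((Finset.Icc 1 ℓ).filter (fun i => j ≤ lam i)).card)
    (p : ℤ) (r s : ℕ) (hp : (r : ℤ) - (s : ℤ) = p)
    (hn : ∀ j : ℕ, j < r → 1 ≤ (lamT (j + 1) : ℤ) - (j : ℤ) + p)
    (hn' : (lamT (r + 1) : ℤ) - (r : ℤ) + p ≤ 0)
    (hk : ∀ i : ℕ, 1 ≤ i → i ≤ s → 0 ≤ (lam i : ℤ) - (i : ℤ) - p)
    (hk' : (lam (s + 1) : ℤ) - ((s : ℤ) + 1) - p < 0) :
    ((∑ j ∈ Finset.range r, th (x + m * (((lamT (j + 1) : ℤ) - (j : ℤ) + p - 1 : ℤ) : ℂ)))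
      - ∑ i ∈ Finset.Icc 1 s, th (x - m * (((lam i : ℤ) - (i : ℤ) - p + 1 : ℤ) : ℂ)))
      - dPrime t m x p ℓ lam
      = if 0 ≤ p then ∑ j ∈ Finset.range p.toNat, th (x + (j : ℂ) * m)
        else -∑ j ∈ Finset.range (-p).toNat, th (x - ((j : ℂ) + 1) * m) := by
  classical
  set M : ℕ := ℓ + s + 1 with hM
  set F : ℤ → ℂ := fun a => th (x + m * ((p + a : ℤ) : ℂ)) with hF
  have hsle : (-p : ℤ) ≤ (s : ℤ) := by
    have := hk'
    omega
  have hTmono := fun {j j'} (h : j ≤ j') => lamT_mono lam lamT ℓ hconj h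
  have hTle := fun j => lamT_le lam lamT ℓ hconj j
  -- Step A : rewrite dPrime by telescoping each row
  have hrow : ∀ i : ℕ,
      (∑ j ∈ Finset.Icc 1 (lam i), t (x + m * ((p + (i : ℤ) - (j : ℤ) : ℤ) : ℂ)))
        = F ((i:ℤ) - 1) - F ((i:ℤ) - 1 - lam i) := by
    intro i
    have hterm : ∀ j : ℕ, t (x + m * ((p + (i : ℤ) - (j : ℤ) : ℤ) : ℂ))
        = F ((i:ℤ) - j) - F ((i:ℤ) - j - 1) := by
      intro j
      rw [ht]
      simp only [hF]
      congr 2 <;> push_cast <;> ring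
    rw [Finset.sum_congr rfl (fun j _ => hterm j)]
    rw [show Finset.Icc 1 (lam i) = Finset.Ico 1 (lam i + 1) from by
      rw [Finset.Ico_add_one_right_eq_Icc]]
    rw [Finset.sum_Ico_eq_sum_range]
    have htel := Finset.sum_range_sub' (f := fun k : ℕ => F ((i:ℤ) - 1 - k)) (n := lam i + 1 - 1)
    have hcg : ∀ k : ℕ, F ((i:ℤ) - (1 + k : ℕ)) - F ((i:ℤ) - (1 + k : ℕ) - 1)
        = F ((i:ℤ) - 1 - k) - F ((i:ℤ) - 1 - (k + 1 : ℕ)) := by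
      intro k
      congr 2 <;> push_cast <;> ring
    rw [Finset.sum_congr rfl (fun k _ => hcg k), htel]
    congr 2 <;> push_cast <;> omega
  have hdP : dPrime t m x p ℓ lam
      = ∑ i ∈ Finset.Icc 1 M, (F ((i:ℤ) - 1) - F ((i:ℤ) - 1 - lam i)) := by
    unfold dPrime
    rw [Finset.sum_congr rfl (fun i _ => hrow i)]
    apply Finset.sum_subset
    · exact Finset.Icc_subset_Icc le_rfl (by omega)
    · intro i hiM hiℓ
      simp only [Finset.mem_Icc] at hiM hiℓ
      have hz : lam i = 0 := hsupp i (by omega)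
      rw [hz]
      norm_num
  -- Step B : rewrite the two d(λ,p) sums
  have hS1 : (∑ j ∈ Finset.range r, th (x + m * (((lamT (j + 1) : ℤ) - (j : ℤ) + p - 1 : ℤ) : ℂ)))
      = ∑ j ∈ Finset.Icc 1 r, F ((lamT j : ℤ) - j) := by
    rw [show Finset.Icc 1 r = Finset.Ico 1 (r + 1) from by rw [Finset.Ico_add_one_right_eq_Icc]]
    rw [Finset.sum_Ico_eq_sum_range]
    rw [show r + 1 - 1 = r from rfl]
    apply Finset.sum_congr rfl
    intro k _
    rw [add_comm 1 k]
    simp only [hF]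
    congr 1
    push_cast
    ring
  have hS2 : (∑ i ∈ Finset.Icc 1 s, th (x - m * (((lam i : ℤ) - (i : ℤ) - p + 1 : ℤ) : ℂ)))
      = ∑ i ∈ Finset.Icc 1 s, F ((i:ℤ) - 1 - lam i) := by
    apply Finset.sum_congr rfl
    intro i _
    simp only [hF]
    congr 1
    push_cast
    ring
  -- Step C : the key bijection
  set P : ℤ → Prop := fun c => ∃ j : ℕ, 1 ≤ j ∧ (lamT j : ℤ) - j = c with hP
  have key1 : ∑ j ∈ Finset.Icc 1 r, F ((lamT j : ℤ) - j)
      = ∑ c ∈ (Finset.Icc (-p) ((M:ℤ) - 1)).filter P, F c := by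
    apply Finset.sum_bij (i := fun j _ => (lamT j : ℤ) - j)
    · intro j hj
      simp only [Finset.mem_Icc] at hj
      simp only [Finset.mem_filter, Finset.mem_Icc]
      refine ⟨⟨?_, ?_⟩, ⟨j, hj.1, rfl⟩⟩
      · have h1 := hn (j - 1) (by omega)
        have h2 : j - 1 + 1 = j := by omega
        rw [h2] at h1
        omega
      · have := hTle j
        omega
    · intro j₁ h₁ j₂ h₂ heq
      rcases Nat.lt_trichotomy j₁ j₂ with h | h | h
      · have := hTmono h.le
        omega
      · exact h
      · have := hTmono h.le
        omega
    · intro c hc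
      simp only [Finset.mem_filter, Finset.mem_Icc, hP] at hc
      obtain ⟨⟨hc1, hc2⟩, j, hj1, hj2⟩ := hc
      refine ⟨j, ?_, hj2⟩
      simp only [Finset.mem_Icc]
      refine ⟨hj1, ?_⟩
      by_contra hcon
      push_neg at hcon
      have := hTmono (show r + 1 ≤ j by omega)
      have := hn'
      omega
    · intro j _
      rfl
  have key2 : ∑ i ∈ Finset.Icc (s+1) M, F ((i:ℤ) - 1 - lam i)
      = ∑ c ∈ (Finset.Icc (-p) ((M:ℤ) - 1)).filter (fun c => ¬ P c), F c := by
    apply Finset.sum_bij (i := fun (i : ℕ) (_ : i ∈ Finset.Icc (s+1) M) => (i:ℤ) - 1 - (lam i : ℤ))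
    · intro i hi
      simp only [Finset.mem_Icc] at hi
      simp only [Finset.mem_filter, Finset.mem_Icc]
      refine ⟨⟨?_, ?_⟩, ?_⟩
      · have h1 : lam i ≤ lam (s+1) := hmono (s+1) i (by omega) hi.1
        have := hk'
        omega
      · have : (0:ℤ) ≤ (lam i : ℤ) := Int.natCast_nonneg _
        omega
      · intro hA
        exact not_both lam lamT ℓ hmono hsupp hconj _ hA ⟨i, by omega, rfl⟩
    · intro i₁ h₁ i₂ h₂ heq
      simp only [Finset.mem_Icc] at h₁ h₂
      rcases Nat.lt_trichotomy i₁ i₂ with h | h | h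
      · have := hmono i₁ i₂ (by omega) h.le
        omega
      · exact h
      · have := hmono i₂ i₁ (by omega) h.le
        omega
    · intro c hc
      simp only [Finset.mem_filter, Finset.mem_Icc] at hc
      obtain ⟨⟨hc1, hc2⟩, hcP⟩ := hc
      rcases exists_ab lam lamT ℓ hmono hsupp hconj c with hA | hB
      · exact absurd hA hcP
      · obtain ⟨i, hi1, hi2⟩ := hB
        refine ⟨i, ?_, hi2⟩
        simp only [Finset.mem_Icc]
        constructor
        · by_contra hcon
          push_neg at hcon
          have := hk i hi1 (by omega)
          omega
        · have hor : lam i = 0 ∨ i ≤ ℓ := by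
            by_cases h : ℓ < i
            · exact Or.inl (hsupp i h)
            · exact Or.inr (by omega)
          omega
    · intro i _
      rfl
  have keysum : (∑ j ∈ Finset.Icc 1 r, F ((lamT j : ℤ) - j))
      + ∑ i ∈ Finset.Icc (s+1) M, F ((i:ℤ) - 1 - lam i)
      = ∑ c ∈ Finset.Icc (-p) ((M:ℤ) - 1), F c := by
    rw [key1, key2, Finset.sum_filter_add_sum_filter_not]
  -- splitting the M-sum at s
  have hsplit2 : ∑ i ∈ Finset.Icc 1 M, F ((i:ℤ) - 1 - lam i)
      = (∑ i ∈ Finset.Icc 1 s, F ((i:ℤ) - 1 - lam i))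
        + ∑ i ∈ Finset.Icc (s+1) M, F ((i:ℤ) - 1 - lam i) :=
    nat_sum_split _ (by omega) (by omega)
  -- the shifted full sum
  have hMF : ∑ i ∈ Finset.Icc 1 M, F ((i:ℤ) - 1)
      = ∑ c ∈ Finset.Icc (0:ℤ) ((M:ℤ) - 1), F c := by
    apply Finset.sum_bij (i := fun (i : ℕ) (_ : i ∈ Finset.Icc 1 M) => (i:ℤ) - 1)
    · intro i hi
      simp only [Finset.mem_Icc] at hi ⊢
      omega
    · intro i₁ h₁ i₂ h₂ heq
      omega
    · intro c hc
      simp only [Finset.mem_Icc] at hc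
      refine ⟨(c+1).toNat, ?_, by omega⟩
      simp only [Finset.mem_Icc]
      omega
    · intro i _
      rfl
  -- final computation
  have hfin : (∑ c ∈ Finset.Icc (-p) ((M:ℤ) - 1), F c)
      - ∑ c ∈ Finset.Icc (0:ℤ) ((M:ℤ) - 1), F c
      = if 0 ≤ p then ∑ j ∈ Finset.range p.toNat, th (x + (j : ℂ) * m)
        else -∑ j ∈ Finset.range (-p).toNat, th (x - ((j : ℂ) + 1) * m) := by
    split_ifs with hp0
    · have hsplit : ∑ c ∈ Finset.Icc (-p) ((M:ℤ) - 1), F c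
          = (∑ c ∈ Finset.Icc (-p) (-1:ℤ), F c) + ∑ c ∈ Finset.Icc (0:ℤ) ((M:ℤ) - 1), F c := by
        have := int_sum_split F (a := -p) (b := -1) (c := (M:ℤ) - 1) (by omega) (by omega)
        simpa using this
      rw [hsplit]
      have : ∑ j ∈ Finset.range p.toNat, th (x + (j : ℂ) * m)
          = ∑ c ∈ Finset.Icc (-p) (-1:ℤ), F c := by
        apply Finset.sum_bij (i := fun (j : ℕ) (_ : j ∈ Finset.range p.toNat) => (j:ℤ) - p)
        · intro j hj
          simp only [Finset.mem_range] at hj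
          simp only [Finset.mem_Icc]
          omega
        · intro j₁ h₁ j₂ h₂ heq
          omega
        · intro c hc
          simp only [Finset.mem_Icc] at hc
          refine ⟨(c+p).toNat, ?_, by omega⟩
          simp only [Finset.mem_range]
          omega
        · intro j _
          simp only [hF]
          congr 1
          push_cast
          ring
      rw [this]
      ring
    · push_neg at hp0
      have hsplit : ∑ c ∈ Finset.Icc (0:ℤ) ((M:ℤ) - 1), F c
          = (∑ c ∈ Finset.Icc (0:ℤ) (-p-1), F c) + ∑ c ∈ Finset.Icc (-p) ((M:ℤ) - 1), F c := by
        have := int_sum_split F (a := (0:ℤ)) (b := -p-1) (c := (M:ℤ) - 1) (by omega) (by omega)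
        simpa using this
      rw [hsplit]
      have : ∑ j ∈ Finset.range (-p).toNat, th (x - ((j : ℂ) + 1) * m)
          = ∑ c ∈ Finset.Icc (0:ℤ) (-p-1), F c := by
        apply Finset.sum_bij (i := fun (j : ℕ) (_ : j ∈ Finset.range (-p).toNat) => -(j:ℤ) - 1 - p)
        · intro j hj
          simp only [Finset.mem_range] at hj
          simp only [Finset.mem_Icc]
          omega
        · intro j₁ h₁ j₂ h₂ heq
          omega
        · intro c hc
          simp only [Finset.mem_Icc] at hc
          refine ⟨(-c-1-p).toNat, ?_, by omega⟩
          simp only [Finset.mem_range]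
          omega
        · intro j _
          simp only [hF]
          congr 1
          push_cast
          ring
      rw [this]
      ring
  rw [hS1, hS2, hdP, Finset.sum_sub_distrib, hsplit2, hMF]
  linear_combination keysum + hfin
end
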